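/- For any $t > 0$, the set $\mathcal{F}_t = \{b_x a_{\ln y} d_\theta \in \mathrm{PSL}(2,\mathbb{R}) : x \in \mathbb{R}, 1 < y < e^t, \theta \in [0,2\pi)\}$ is a fundamental domain in $\mathrm{PSL}(2,\mathbb{R})$ (under left multiplication) for the cyclic Fuchsian group $\langle a_t \rangle$. -/

import Mathlib

open Matrix Complex Set

abbrev SL2R := Matrix.SpecialLinearGroup (Fin 2) ℝ

abbrev PSL2R := SL2R ⧸ Subgroup.center SL2R

instance : TopologicalSpace SL2R :=
  TopologicalSpace.induced (fun G : SL2R => (G : Matrix (Fin 2) (Fin 2) ℝ)) inferInstance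

instance : TopologicalSpace PSL2R := instTopologicalSpaceQuotient

noncomputable def Amat (t : ℝ) : SL2R :=
  ⟨!![Real.exp (t/2), 0; 0, Real.exp (-(t/2))], by
    rw [Matrix.det_fin_two_of, ← Real.exp_add]
    simp⟩

noncomputable def Bmat (t : ℝ) : SL2R :=
  ⟨!![1, t; 0, 1], by rw [Matrix.det_fin_two_of]; ring⟩

noncomputable def Dmat (t : ℝ) : SL2R :=
  ⟨!![Real.cos (t/2), Real.sin (t/2); -Real.sin (t/2), Real.cos (t/2)], by
    rw [Matrix.det_fin_two_of]
    nlinarith [Real.sin_sq_add_cos_sq (t/2)]⟩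

noncomputable def aP (t : ℝ) : PSL2R := QuotientGroup.mk (Amat t)
noncomputable def bP (t : ℝ) : PSL2R := QuotientGroup.mk (Bmat t)
noncomputable def dP (t : ℝ) : PSL2R := QuotientGroup.mk (Dmat t)

noncomputable def moeb (G : SL2R) (z : ℂ) : ℂ :=
  ((G 0 0 : ℝ) * z + (G 0 1 : ℝ)) / ((G 1 0 : ℝ) * z + (G 1 1 : ℝ))

noncomputable def moebP (g : PSL2R) : ℂ → ℂ := moeb (Quotient.out g)

def H2 : Set ℂ := {z | 0 < z.im}

def IsFundDomH2 (Γ : Subgroup PSL2R) (F : Set ℂ) : Prop :=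
  F.Nonempty ∧ F ⊆ H2 ∧ IsOpen F ∧
  (⋃ γ ∈ Γ, moebP γ '' (closure F ∩ H2)) = H2 ∧
  ∀ γ ∈ Γ, γ ≠ 1 → (moebP γ '' F) ∩ F = ∅

def IsFundDomPSL (Γ : Subgroup PSL2R) (F : Set PSL2R) : Prop :=
  F.Nonempty ∧ IsOpen F ∧
  (⋃ γ ∈ Γ, (fun g => γ * g) '' closure F) = Set.univ ∧
  ∀ γ ∈ Γ, γ ≠ 1 → ((fun g => γ * g) '' F) ∩ F = ∅

def calF (F : Set ℂ) : Set PSL2R :=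
  {g | ∃ x y θ : ℝ, (x + y * Complex.I) ∈ F ∧ θ ∈ Set.Ico 0 (2 * Real.pi) ∧
       g = bP x * aP (Real.log y) * dP θ}

/-! ### Auxiliary material -/

/-- The square norm of the bottom row of a matrix in `SL2R`. -/
def Nfun (G : SL2R) : ℝ := (G 1 0)^2 + (G 1 1)^2

lemma Nfun_mul_center (a : SL2R) (z : SL2R) (hz : z ∈ Subgroup.center SL2R) :
    Nfun (a * z) = Nfun a := by
  obtain ⟨r, hr, hrz⟩ := Matrix.SpecialLinearGroup.mem_center_iff.mp hz
  have h2 : r^2 = 1 := by simpa using hr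
  have hzc : (z : Matrix (Fin 2) (Fin 2) ℝ) = Matrix.scalar (Fin 2) r := hrz.symm
  have e10 : (a * z) 1 0 = r * (a 1 0) := by
    simp [Matrix.SpecialLinearGroup.coe_mul, hzc, Matrix.mul_apply, Fin.sum_univ_two,
      Matrix.scalar_apply]
    ring
  have e11 : (a * z) 1 1 = r * (a 1 1) := by
    simp [Matrix.SpecialLinearGroup.coe_mul, hzc, Matrix.mul_apply, Fin.sum_univ_two,
      Matrix.scalar_apply]
    ring
  simp only [Nfun, e10, e11]
  nlinarith [h2]

/-- `Nfun` descends to `PSL2R`. -/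
noncomputable def Npsl : PSL2R → ℝ :=
  Quotient.lift Nfun (by
    intro a b hab
    have h : a⁻¹ * b ∈ Subgroup.center SL2R := QuotientGroup.leftRel_apply.mp hab
    have hb : b = a * (a⁻¹ * b) := by group
    rw [hb, Nfun_mul_center a _ h])

lemma Npsl_mk (G : SL2R) : Npsl (QuotientGroup.mk G) = Nfun G := rfl

lemma det_entries (G : SL2R) : G 0 0 * G 1 1 - G 0 1 * G 1 0 = 1 := by
  have hdet : (G : Matrix (Fin 2) (Fin 2) ℝ).det = 1 := G.2
  rw [Matrix.det_fin_two] at hdet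
  exact hdet

lemma Nfun_pos (G : SL2R) : 0 < Nfun G := by
  rw [Nfun]
  by_contra h
  push_neg at h
  have h10 : G 1 0 = 0 := by nlinarith [sq_nonneg (G 1 0), sq_nonneg (G 1 1)]
  have h11 : G 1 1 = 0 := by nlinarith [sq_nonneg (G 1 0), sq_nonneg (G 1 1)]
  have := det_entries G
  rw [h10, h11] at this; simp at this

lemma Nfun_BAD (x s θ : ℝ) : Nfun (Bmat x * Amat s * Dmat θ) = Real.exp (-s) := by
  have h10 : (Bmat x * Amat s * Dmat θ) 1 0 = -(Real.exp (-(s/2)) * Real.sin (θ/2)) := by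
    simp only [Matrix.SpecialLinearGroup.coe_mul]; simp [Bmat, Amat, Dmat, Matrix.SpecialLinearGroup.coe_mul, Matrix.mul_apply, Fin.sum_univ_two]
  have h11 : (Bmat x * Amat s * Dmat θ) 1 1 = Real.exp (-(s/2)) * Real.cos (θ/2) := by
    simp only [Matrix.SpecialLinearGroup.coe_mul]; simp [Bmat, Amat, Dmat, Matrix.SpecialLinearGroup.coe_mul, Matrix.mul_apply, Fin.sum_univ_two]
  rw [Nfun, h10, h11]
  have hpy := Real.sin_sq_add_cos_sq (θ/2)
  have he : Real.exp (-(s/2)) * Real.exp (-(s/2)) = Real.exp (-s) := by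
    rw [← Real.exp_add]; ring_nf
  nlinarith [hpy, he]

lemma Nfun_Amul (s : ℝ) (G : SL2R) : Nfun (Amat s * G) = Real.exp (-s) * Nfun G := by
  have h10 : (Amat s * G) 1 0 = Real.exp (-(s/2)) * G 1 0 := by
    simp only [Matrix.SpecialLinearGroup.coe_mul]; simp [Amat, Matrix.SpecialLinearGroup.coe_mul, Matrix.mul_apply, Fin.sum_univ_two]
  have h11 : (Amat s * G) 1 1 = Real.exp (-(s/2)) * G 1 1 := by
    simp only [Matrix.SpecialLinearGroup.coe_mul]; simp [Amat, Matrix.SpecialLinearGroup.coe_mul, Matrix.mul_apply, Fin.sum_univ_two]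
  have he : Real.exp (-(s/2)) * Real.exp (-(s/2)) = Real.exp (-s) := by
    rw [← Real.exp_add]; ring_nf
  rw [Nfun, h10, h11, Nfun]; nlinarith [he]

lemma Amat_mul (s u : ℝ) : Amat s * Amat u = Amat (s + u) := by
  ext i j
  fin_cases i <;> fin_cases j <;> simp only [Matrix.SpecialLinearGroup.coe_mul] <;>
    simp [Amat, Matrix.SpecialLinearGroup.coe_mul, Matrix.mul_apply, Fin.sum_univ_two,
      ← Real.exp_add] <;> ring_nf

lemma Amat_zero : Amat 0 = 1 := by
  ext i j
  fin_cases i <;> fin_cases j <;> simp [Amat]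

lemma Amat_zpow (t : ℝ) (n : ℤ) : (Amat t)^n = Amat (n * t) := by
  have hinv : ∀ u, (Amat u)⁻¹ = Amat (-u) := by
    intro u
    rw [inv_eq_iff_mul_eq_one, Amat_mul]; simp [Amat_zero]
  induction n using Int.induction_on with
  | zero => simpa using Amat_zero.symm
  | succ k ih => rw [_root_.zpow_add_one, ih, Amat_mul]; norm_num; ring_nf
  | pred k ih => rw [_root_.zpow_sub_one, ih, hinv, Amat_mul]; norm_num; ring_nf

lemma Npsl_aPmul (s : ℝ) (g : PSL2R) :
    Npsl (QuotientGroup.mk (Amat s) * g) = Real.exp (-s) * Npsl g := by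
  induction g using QuotientGroup.induction_on with
  | H G => rw [← QuotientGroup.mk_mul, Npsl_mk, Npsl_mk, Nfun_Amul]

lemma aP_zpow (t : ℝ) (n : ℤ) : (aP t)^n = QuotientGroup.mk (Amat (n * t)) := by
  rw [aP, ← QuotientGroup.mk_zpow, Amat_zpow]

/-- The Iwasawa decomposition, given explicit polar data for the bottom row. -/
lemma iwasawa (G : SL2R) (ψ s r : ℝ) (hr : 0 < r)
    (hs1 : Real.exp (s/2) = r⁻¹) (hs2 : Real.exp (-(s/2)) = r)
    (h10 : G 1 0 = -(r * Real.sin ψ)) (h11 : G 1 1 = r * Real.cos ψ) :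
    G = Bmat ((-(G 0 0) * Real.sin ψ + G 0 1 * Real.cos ψ) / r)
        * Amat s * Dmat (2 * ψ) := by
  have hpy := Real.sin_sq_add_cos_sq ψ
  have hrne : r ≠ 0 := ne_of_gt hr
  have hdr : G 0 0 * (r * Real.cos ψ) + G 0 1 * (r * Real.sin ψ) = 1 := by
    have hd := det_entries G
    rw [h10, h11] at hd; linarith [hd]
  ext i j
  fin_cases i <;> fin_cases j <;> simp only [Matrix.SpecialLinearGroup.coe_mul] <;>
    simp [Bmat, Amat, Dmat, Matrix.SpecialLinearGroup.coe_mul, Matrix.mul_apply,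
      Fin.sum_univ_two, hs1, hs2, h10, h11]
  · field_simp
    linear_combination Real.cos ψ * hdr - (G 0 0 * r) * hpy
  · field_simp
    linear_combination Real.sin ψ * hdr - (G 0 1 * r) * hpy

lemma angle_exists (u v : ℝ) (h : u^2 + v^2 = 1) :
    ∃ ψ ∈ Set.Ico 0 Real.pi,
      (Real.cos ψ = u ∧ Real.sin ψ = v) ∨ (Real.cos ψ = -u ∧ Real.sin ψ = -v) := by
  have hu1 : -1 ≤ u := by nlinarith [sq_nonneg v]
  have hu2 : u ≤ 1 := by nlinarith [sq_nonneg v]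
  have hc := Real.cos_arccos hu1 hu2
  have hs : Real.sin (Real.arccos u) = |v| := by
    rw [Real.sin_arccos, show 1 - u^2 = v^2 by linarith, Real.sqrt_sq_eq_abs]
  have h0 := Real.arccos_nonneg u
  have hpi := Real.arccos_le_pi u
  rcases le_or_gt 0 v with hv | hv
  · rcases lt_or_eq_of_le hpi with hlt | heq
    · exact ⟨Real.arccos u, ⟨h0, hlt⟩, Or.inl ⟨hc, by rw [hs, _root_.abs_of_nonneg hv]⟩⟩
    · have hupi : u = -1 := by rw [← hc, heq, Real.cos_pi]
      have hv0 : v = 0 := by nlinarith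
      exact ⟨0, ⟨le_refl 0, Real.pi_pos⟩, Or.inr ⟨by simp [hupi], by simp [hv0]⟩⟩
  · refine ⟨Real.pi - Real.arccos u, ⟨by linarith, ?_⟩, Or.inr ⟨?_, ?_⟩⟩
    · have : 0 < Real.arccos u := by
        rcases lt_or_eq_of_le h0 with h' | h'
        · exact h'
        · exfalso
          have : u = 1 := by rw [← hc, ← h', Real.cos_zero]
          nlinarith
      linarith
    · rw [Real.cos_pi_sub, hc]
    · rw [Real.sin_pi_sub, hs, _root_.abs_of_neg hv]

/-- The negative of an `SL2R` matrix. -/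
noncomputable def negSL (G : SL2R) : SL2R :=
  ⟨-(G : Matrix (Fin 2) (Fin 2) ℝ), by
    rw [Matrix.det_neg, G.2]; simp⟩

lemma cneg_det : ((-1 : Matrix (Fin 2) (Fin 2) ℝ)).det = 1 := by
  rw [show (-1 : Matrix (Fin 2) (Fin 2) ℝ) = -(1 : Matrix (Fin 2) (Fin 2) ℝ) by ring,
    Matrix.det_neg]
  simp

noncomputable def cneg : SL2R := ⟨(-1 : Matrix (Fin 2) (Fin 2) ℝ), cneg_det⟩

lemma cneg_center : cneg ∈ Subgroup.center SL2R := by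
  apply Matrix.SpecialLinearGroup.mem_center_iff.mpr
  refine ⟨-1, by norm_num, ?_⟩
  show Matrix.scalar (Fin 2) (-1 : ℝ) = (cneg : Matrix (Fin 2) (Fin 2) ℝ)
  ext i j
  simp [Matrix.scalar_apply, cneg, Matrix.diagonal, Matrix.one_apply]
  split <;> simp_all

lemma negSL_eq (G : SL2R) : negSL G = G * cneg := by
  apply Subtype.ext
  show -(G : Matrix (Fin 2) (Fin 2) ℝ) = (G : Matrix (Fin 2) (Fin 2) ℝ) * (-1)
  simp

lemma negSL_mk (G : SL2R) :
    (QuotientGroup.mk (negSL G) : PSL2R) = QuotientGroup.mk G := by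
  rw [negSL_eq, QuotientGroup.mk_mul,
    (QuotientGroup.eq_one_iff cneg).mpr cneg_center, mul_one]

/-- Existence of the Iwasawa/NAK decomposition in `PSL2R`. -/
lemma exists_decomp (g : PSL2R) :
    ∃ x θ : ℝ, θ ∈ Set.Ico 0 (2 * Real.pi) ∧
      g = bP x * aP (Real.log (Npsl g)⁻¹) * dP θ := by
  induction g using QuotientGroup.induction_on with
  | H G =>
  set r : ℝ := Real.sqrt (Nfun G) with hrdef
  have hNpos := Nfun_pos G
  have hr : 0 < r := Real.sqrt_pos.mpr hNpos
  have hr2 : r^2 = Nfun G := Real.sq_sqrt (le_of_lt hNpos)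
  set s : ℝ := Real.log (Nfun G)⁻¹ with hsdef
  have hlog : Real.log (Nfun G) = 2 * Real.log r := by
    rw [← hr2, Real.log_pow]; push_cast; ring
  have hs1 : Real.exp (s/2) = r⁻¹ := by
    rw [hsdef, Real.log_inv, hlog, show -(2 * Real.log r)/2 = -Real.log r by ring,
      Real.exp_neg, Real.exp_log hr]
  have hs2 : Real.exp (-(s/2)) = r := by
    rw [hsdef, Real.log_inv, hlog, show -(-(2 * Real.log r)/2) = Real.log r by ring,
      Real.exp_log hr]
  have huv : (G 1 1 / r)^2 + (-(G 1 0) / r)^2 = 1 := by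
    field_simp
    rw [hr2, Nfun]; ring
  obtain ⟨ψ, hψmem, hcase⟩ := angle_exists (G 1 1 / r) (-(G 1 0) / r) huv
  have hrne : r ≠ 0 := ne_of_gt hr
  rcases hcase with ⟨hcos, hsin⟩ | ⟨hcos, hsin⟩
  · have h10 : G 1 0 = -(r * Real.sin ψ) := by
      rw [hsin]; field_simp
    have h11 : G 1 1 = r * Real.cos ψ := by
      rw [hcos]; field_simp
    refine ⟨(-(G 0 0) * Real.sin ψ + G 0 1 * Real.cos ψ) / r, 2 * ψ,
      ⟨by linarith [hψmem.1], by linarith [hψmem.2]⟩, ?_⟩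
    rw [Npsl_mk]
    conv_lhs => rw [iwasawa G ψ s r hr hs1 hs2 h10 h11]
    rw [bP, aP, dP, ← QuotientGroup.mk_mul, ← QuotientGroup.mk_mul]
  · set G' := negSL G with hG'def
    have hco : (G' : Matrix (Fin 2) (Fin 2) ℝ) = -(G : Matrix (Fin 2) (Fin 2) ℝ) := rfl
    have h10' : G' 1 0 = -(G 1 0) := by rw [show (G' 1 0 : ℝ) = (G' : Matrix (Fin 2) (Fin 2) ℝ) 1 0 from rfl, hco]; simp
    have h11' : G' 1 1 = -(G 1 1) := by rw [show (G' 1 1 : ℝ) = (G' : Matrix (Fin 2) (Fin 2) ℝ) 1 1 from rfl, hco]; simp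
    have h10 : G' 1 0 = -(r * Real.sin ψ) := by
      rw [h10', hsin]; field_simp
    have h11 : G' 1 1 = r * Real.cos ψ := by
      rw [h11', hcos]; field_simp
    refine ⟨(-(G' 0 0) * Real.sin ψ + G' 0 1 * Real.cos ψ) / r, 2 * ψ,
      ⟨by linarith [hψmem.1], by linarith [hψmem.2]⟩, ?_⟩
    rw [Npsl_mk]
    rw [← negSL_mk G, ← hG'def]
    conv_lhs => rw [iwasawa G' ψ s r hr hs1 hs2 h10 h11]
    rw [bP, aP, dP, ← QuotientGroup.mk_mul, ← QuotientGroup.mk_mul]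

lemma Npsl_BAD (x s θ : ℝ) : Npsl (bP x * aP s * dP θ) = Real.exp (-s) := by
  rw [bP, aP, dP, ← QuotientGroup.mk_mul, ← QuotientGroup.mk_mul, Npsl_mk, Nfun_BAD]

lemma im_point (x y : ℝ) : ((x : ℂ) + (y : ℂ) * Complex.I).im = y := by simp

/-- Membership in `calF` is exactly a condition on `Npsl`. -/
lemma mem_calF_iff (t : ℝ) (g : PSL2R) :
    g ∈ calF {z : ℂ | 1 < z.im ∧ z.im < Real.exp t} ↔
      Npsl g ∈ Set.Ioo (Real.exp (-t)) 1 := by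
  constructor
  · rintro ⟨x, y, θ, hmem, hθ, rfl⟩
    rw [Set.mem_setOf_eq, im_point] at hmem
    obtain ⟨hy1, hy2⟩ := hmem
    have hy0 : 0 < y := lt_trans one_pos hy1
    rw [Npsl_BAD]
    have hlogy : Real.log y < t := by
      rw [← Real.log_exp t]
      exact Real.log_lt_log hy0 hy2
    constructor
    · exact Real.exp_lt_exp.mpr (by linarith)
    · rw [Real.exp_lt_one_iff]
      have := Real.log_pos hy1
      linarith
  · intro hN
    obtain ⟨x, θ, hθ, hg⟩ := exists_decomp g
    refine ⟨x, (Npsl g)⁻¹, θ, ?_, hθ, hg⟩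
    rw [Set.mem_setOf_eq, im_point]
    obtain ⟨h1, h2⟩ := hN
    have hNpos : 0 < Npsl g := lt_trans (Real.exp_pos _) h1
    constructor
    · exact (one_lt_inv₀ hNpos).mpr h2
    · have ha : (Npsl g)⁻¹ < (Real.exp (-t))⁻¹ := inv_strictAnti₀ (Real.exp_pos _) h1
      rwa [Real.exp_neg, inv_inv] at ha

lemma continuous_Npsl : Continuous Npsl := by
  apply Continuous.quotient_lift
  have h1 : Continuous (fun G : SL2R => (G : Matrix (Fin 2) (Fin 2) ℝ)) :=
    continuous_induced_dom
  have h10 : Continuous (fun G : SL2R => (G 1 0 : ℝ)) :=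
    (continuous_apply (0 : Fin 2)).comp ((continuous_apply (1 : Fin 2)).comp h1)
  have h11 : Continuous (fun G : SL2R => (G 1 1 : ℝ)) :=
    (continuous_apply (1 : Fin 2)).comp ((continuous_apply (1 : Fin 2)).comp h1)
  exact (h10.pow 2).add (h11.pow 2)

lemma continuous_Amat : Continuous (fun s : ℝ => Amat s) := by
  apply continuous_induced_rng.mpr
  apply continuous_matrix
  intro i j
  fin_cases i <;> fin_cases j <;> simp [Amat] <;> fun_prop

lemma continuous_Amat_mul (G : SL2R) :
    Continuous (fun s : ℝ => (QuotientGroup.mk (Amat s * G) : PSL2R)) := by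
  apply Continuous.comp continuous_quotient_mk'
  apply continuous_induced_rng.mpr
  exact ((continuous_induced_dom.comp continuous_Amat).matrix_mul continuous_const : _)

/-- Points with `Npsl` in the closed interval lie in the closure of `calF`. -/
lemma mem_closure_calF (t : ℝ) (ht : 0 < t) (h : PSL2R)
    (hN : Npsl h ∈ Set.Icc (Real.exp (-t)) 1) :
    h ∈ closure (calF {z : ℂ | 1 < z.im ∧ z.im < Real.exp t}) := by
  induction h using QuotientGroup.induction_on with
  | H G =>
  set u : ℝ := Nfun G with hudef
  have hu0 : 0 < u := Nfun_pos G
  rw [Npsl_mk] at hN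
  set S : Set ℝ := Set.Ioo (Real.log u) (Real.log u + t) with hSdef
  set f : ℝ → PSL2R := fun s => QuotientGroup.mk (Amat s * G) with hfdef
  have hf0 : f 0 = QuotientGroup.mk G := by
    rw [hfdef]; simp only [Amat_zero, one_mul]
  have hcont : Continuous f := continuous_Amat_mul G
  have hlogu1 : -t ≤ Real.log u := by
    calc -t = Real.log (Real.exp (-t)) := (Real.log_exp _).symm
      _ ≤ Real.log u := Real.log_le_log (Real.exp_pos _) hN.1
  have hlogu2 : Real.log u ≤ 0 := by
    calc Real.log u ≤ Real.log 1 := Real.log_le_log hu0 hN.2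
      _ = 0 := Real.log_one
  have h0cl : (0 : ℝ) ∈ closure S := by
    rw [hSdef, closure_Ioo (by linarith : Real.log u ≠ Real.log u + t)]
    exact ⟨hlogu2, by linarith⟩
  have himg : f '' S ⊆ calF {z : ℂ | 1 < z.im ∧ z.im < Real.exp t} := by
    rintro _ ⟨s, hs, rfl⟩
    rw [mem_calF_iff]
    have : Npsl (f s) = Real.exp (-s) * u := by
      rw [hfdef]; simp only [Npsl_mk, Nfun_Amul, hudef]
    rw [this]
    have hueq : u = Real.exp (Real.log u) := (Real.exp_log hu0).symm
    rw [hueq, ← Real.exp_add]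
    constructor
    · exact Real.exp_lt_exp.mpr (by obtain ⟨h1, h2⟩ := hs; linarith)
    · calc Real.exp (-s + Real.log u) < Real.exp 0 :=
            Real.exp_lt_exp.mpr (by obtain ⟨h1, h2⟩ := hs; linarith)
        _ = 1 := Real.exp_zero
  have : f 0 ∈ closure (f '' S) :=
    (hcont.continuousWithinAt).mem_closure_image h0cl
  rw [hf0] at this
  exact closure_mono himg this

theorem stmt9 (t : ℝ) (ht : 0 < t) :
    IsFundDomPSL (Subgroup.zpowers (aP t))
      (calF {z : ℂ | 1 < z.im ∧ z.im < Real.exp t}) := by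
  refine ⟨?_, ?_, ?_, ?_⟩
  · -- Nonempty
    refine ⟨bP 0 * aP (Real.log (Real.exp (t/2))) * dP 0, 0, Real.exp (t/2), 0, ?_, ?_, rfl⟩
    · rw [Set.mem_setOf_eq, im_point]
      constructor
      · exact Real.one_lt_exp_iff.mpr (by linarith)
      · exact Real.exp_lt_exp.mpr (by linarith)
    · exact ⟨le_refl 0, by positivity⟩
  · -- Open
    have : calF {z : ℂ | 1 < z.im ∧ z.im < Real.exp t} =
        Npsl ⁻¹' (Set.Ioo (Real.exp (-t)) 1) := by
      ext g; exact mem_calF_iff t g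
    rw [this]
    exact isOpen_Ioo.preimage continuous_Npsl
  · -- Covering
    apply Set.eq_univ_of_forall
    intro g
    rw [Set.mem_iUnion₂]
    set u : ℝ := Npsl g with hudef
    have hu0 : 0 < u := by
      induction g using QuotientGroup.induction_on with
      | H G => rw [hudef, Npsl_mk]; exact Nfun_pos G
    set n : ℤ := ⌊-Real.log u / t⌋ with hndef
    refine ⟨(aP t)^n, Subgroup.zpow_mem _ (Subgroup.mem_zpowers _) n, ?_⟩
    refine ⟨(aP t)^(-n) * g, ?_, by group⟩
    apply mem_closure_calF t ht
    have hNval : Npsl ((aP t)^(-n) * g) = Real.exp (n * t) * u := by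
      rw [aP_zpow, Npsl_aPmul, ← hudef]
      congr 1
      push_cast
      ring_nf
    rw [hNval]
    have hfl1 : (n : ℝ) ≤ -Real.log u / t := Int.floor_le _
    have hfl2 : -Real.log u / t - 1 < n := by
      have := Int.sub_one_lt_floor (-Real.log u / t)
      exact_mod_cast this
    have hb1 : (n : ℝ) * t ≤ -Real.log u := (le_div_iff₀ ht).mp hfl1
    have hb2 : -Real.log u - t < (n : ℝ) * t := by
      have h' := (div_lt_iff₀ ht).mp (show -Real.log u / t < (n:ℝ) + 1 by linarith)
      nlinarith
    have hexp : Real.exp ((n : ℝ) * t) * u = Real.exp ((n : ℝ) * t + Real.log u) := by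
      rw [Real.exp_add, Real.exp_log hu0]
    rw [hexp]
    constructor
    · apply Real.exp_le_exp.mpr; linarith
    · calc Real.exp ((n:ℝ) * t + Real.log u) ≤ Real.exp 0 := Real.exp_le_exp.mpr (by linarith)
        _ = 1 := Real.exp_zero
  · -- Disjointness
    rintro γ hγ hne
    obtain ⟨n, rfl⟩ := hγ
    rw [Set.eq_empty_iff_forall_notMem]
    rintro z ⟨⟨h, hh, rfl⟩, hz⟩
    rw [mem_calF_iff] at hh hz
    have hNval : Npsl ((aP t)^n * h) = Real.exp (-(n * t)) * Npsl h := by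
      rw [aP_zpow, Npsl_aPmul]
    rw [hNval] at hz
    have hh1 := hh.1; have hh2 := hh.2
    have hz1 := hz.1; have hz2 := hz.2
    have hNpos : 0 < Npsl h := lt_trans (Real.exp_pos _) hh1
    have e1 : Real.exp (-(↑n * t)) * Real.exp (-t) < 1 := by
      calc Real.exp (-(↑n * t)) * Real.exp (-t)
          < Real.exp (-(↑n * t)) * Npsl h :=
            mul_lt_mul_of_pos_left hh1 (Real.exp_pos _)
        _ < 1 := hz2
    have e2 : Real.exp (-t) < Real.exp (-(↑n * t)) := by
      calc Real.exp (-t) < Real.exp (-(↑n * t)) * Npsl h := hz1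
        _ < Real.exp (-(↑n * t)) * 1 := mul_lt_mul_of_pos_left hh2 (Real.exp_pos _)
        _ = Real.exp (-(↑n * t)) := mul_one _
    rw [← Real.exp_add] at e1
    have hn1' : -(↑n * t) + -t < 0 := Real.exp_lt_one_iff.mp e1
    have hn2 : -t < -(↑n * t) := Real.exp_lt_exp.mp e2
    have hn1 : -(↑n * t) < t := by linarith
    have hnabs : (n : ℝ) * t < t ∧ -t < (n:ℝ) * t := ⟨by linarith, by linarith⟩
    have hn0 : n = 0 := by
      by_contra hn
      rcases lt_or_gt_of_ne hn with h' | h'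
      · have hle : n ≤ -1 := by omega
        have : (n : ℝ) ≤ -1 := by exact_mod_cast hle
        nlinarith [hnabs.2]
      · have : (1 : ℝ) ≤ n := by exact_mod_cast h'
        nlinarith [hnabs.1]
    apply hne
    show (aP t)^n = 1
    rw [hn0]
    exact zpow_zero _
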